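/- arXiv:0709.1979 — 3 statements merged into one kernel-verified Lean document; each statement's English description precedes it below -/
import Mathlib

section
/- Let p be a prime with p ≡ 3 (mod 4). Then for every natural number s ≥ 0, p^s divides the binomial coefficient C((p^{2s}-1)/2, (p^{2s}-1)/4). -/
private lemma odd_pow_mod_four (p : ℕ) (hp4 : p % 4 = 3) (j : ℕ) :
    p ^ (2 * j + 1) % 4 = 3 := by
  have h2 : p ^ 2 % 4 = 1 := by
    rw [Nat.pow_mod, hp4]
  have : p ^ (2 * j + 1) = (p ^ 2) ^ j * p := by ring
  rw [this, Nat.mul_mod, Nat.pow_mod, h2, one_pow,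
    Nat.one_mod_eq_one.mpr (by norm_num), one_mul,
    Nat.mod_mod_of_dvd _ (by norm_num : (4:ℕ) ∣ 4), hp4]

theorem pow_dvd_central_binom_of_three_mod_four (p : ℕ) (hp : p.Prime)
    (hp4 : p % 4 = 3) (s : ℕ) :
    p ^ s ∣ Nat.choose ((p ^ (2 * s) - 1) / 2) ((p ^ (2 * s) - 1) / 4) := by
  rcases Nat.eq_zero_or_pos s with rfl | hs
  · simp
  have hp3 : 3 ≤ p := by omega
  set q := p ^ (2 * s) with hq
  -- q % 8 = 1
  have hq8 : q % 8 = 1 := by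
    have h2 : p ^ 2 % 8 = 1 := by
      obtain ⟨t, ht⟩ : ∃ t, p = 2 * t + 1 := ⟨p / 2, by omega⟩
      obtain ⟨u, hu⟩ : 2 ∣ t * (t + 1) := (Nat.even_mul_succ_self t).two_dvd
      have hsq : p ^ 2 = 4 * (t * (t + 1)) + 1 := by rw [ht]; ring
      omega
    have hqq : q = (p ^ 2) ^ s := by rw [hq, ← pow_mul]
    rw [hqq, Nat.pow_mod, h2, one_pow]; omega
  have hqge : 9 ≤ q := by
    calc (9:ℕ) = 3 ^ 2 := by norm_num
    _ ≤ p ^ 2 := Nat.pow_le_pow_left hp3 2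
    _ ≤ p ^ (2 * s) := Nat.pow_le_pow_right (by omega) (by omega)
  set n := (q - 1) / 2 with hn
  set k := (q - 1) / 4 with hk
  have hnk : n - k = k := by omega
  have hkn : k ≤ n := by omega
  have hnpos : 0 < n := by omega
  -- bound on log
  have hnb : Nat.log p n < 2 * s + 1 := by
    apply Nat.log_lt_of_lt_pow hnpos.ne'
    calc n < q := by omega
      _ ≤ p ^ (2 * s + 1) := Nat.pow_le_pow_right (by omega) (by omega)
  have hmul := Nat.Prime.emultiplicity_choose hp hkn hnb
  rw [hnk] at hmul
  apply pow_dvd_of_le_emultiplicity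
  rw [hmul, Nat.cast_le]
  calc s = (Finset.range s).card := (Finset.card_range s).symm
    _ ≤ _ := Finset.card_le_card_of_injOn (fun j => 2 * j + 1) ?_ ?_
  · intro j hj
    simp only [Finset.mem_coe, Finset.mem_range] at hj
    simp only [Finset.mem_coe, Finset.mem_filter, Finset.mem_Ico]
    refine ⟨⟨by omega, by omega⟩, ?_⟩
    -- carry at position i = 2j+1
    set i := 2 * j + 1 with hi
    have hi4 : p ^ i % 4 = 3 := odd_pow_mod_four p hp4 j
    have hi4' : p ^ (2 * s - i) % 4 = 3 := by
      have h' : 2 * s - i = 2 * (s - j - 1) + 1 := by omega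
      rw [h']; exact odd_pow_mod_four p hp4 _
    obtain ⟨a, ha⟩ : ∃ a, p ^ i = 4 * a + 3 := ⟨p ^ i / 4, by omega⟩
    obtain ⟨b, hb⟩ : ∃ b, p ^ (2 * s - i) = 4 * b + 3 := ⟨p ^ (2 * s - i) / 4, by omega⟩
    have hqab : q = 16 * (a * b) + 12 * a + 12 * b + 9 := by
      have : q = p ^ i * p ^ (2 * s - i) := by
        rw [hq, ← pow_add]; congr 1; omega
      rw [this, ha, hb]; ring
    have hkval : k = (4 * a + 3) * b + (3 * a + 2) := by
      have hbk : (4 * a + 3) * b = 4 * (a * b) + 3 * b := by ring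
      omega
    have hmod : k % p ^ i = 3 * a + 2 := by
      rw [ha, hkval, Nat.mul_add_mod, Nat.mod_eq_of_lt (by omega)]
    rw [hmod, ha]
    omega
  · intro a _ b _ h
    simp only at h
    omega
end

section
/- Let p be a prime with p ≡ 3 (mod 4), and let n > 1 be an integer. If s is the largest integer such that p^s divides 4n+1, then p^s divides (4n)!/(n!)^4. -/
theorem pow_dvd_multinomial_quartic (p : ℕ) (hp : p.Prime) (hp4 : p % 4 = 3)
    (n : ℕ) (hn : 1 < n) (s : ℕ)
    (hs : p ^ s ∣ 4 * n + 1) (hs' : ¬ p ^ (s + 1) ∣ 4 * n + 1) :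
    p ^ s ∣ (4 * n).factorial / (n.factorial) ^ 4 := by
  haveI := Fact.mk hp
  have hppos : 0 < p := hp.pos
  -- (n!)^4 ∣ (4n)!
  have h2 : n.factorial * n.factorial ∣ (n + n).factorial :=
    Nat.factorial_mul_factorial_dvd_factorial_add n n
  have h4 : (2*n).factorial * (2*n).factorial ∣ (4*n).factorial := by
    have := Nat.factorial_mul_factorial_dvd_factorial_add (2*n) (2*n)
    rwa [show 2*n + 2*n = 4*n by ring] at this
  have hdvd : (n.factorial)^4 ∣ (4*n).factorial := by
    calc (n.factorial)^4 = (n.factorial * n.factorial)^2 := by ring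
    _ ∣ ((n+n).factorial)^2 := pow_dvd_pow_of_dvd h2 2
    _ = (2*n).factorial * (2*n).factorial := by rw [show n+n = 2*n by ring]; ring
    _ ∣ (4*n).factorial := h4
  have hq0 : (4*n).factorial / (n.factorial)^4 ≠ 0 := by
    have := Nat.div_pos (Nat.le_of_dvd (Nat.factorial_pos _) hdvd)
      (pow_pos (Nat.factorial_pos n) 4)
    omega
  -- key: for odd i ≤ s, ⌊4n/p^i⌋ = 4⌊n/p^i⌋ + 2
  have key : ∀ i, Odd i → i ≤ s → 4*n / p^i = 4*(n / p^i) + 2 := by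
    intro i hodd his
    have hq4 : p ^ i % 4 = 3 := by
      obtain ⟨j, rfl⟩ := hodd
      rw [Nat.pow_mod, hp4, pow_succ, pow_mul, Nat.mul_mod, Nat.pow_mod]
      norm_num
    have hqpos : 0 < p ^ i := pow_pos hppos i
    have hq : p ^ i ∣ 4*n+1 := dvd_trans (pow_dvd_pow p his) hs
    set q := p ^ i with hqdef
    set a := n / q with hadef
    set r := n % q with hrdef
    have hmod : q * a + r = n := Nat.div_add_mod n q
    have hlt : r < q := Nat.mod_lt _ hqpos
    have h1 : q ∣ 4*r + 1 := by
      have hx : q ∣ 4*(q*a) := ⟨4*a, by ring⟩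
      have h3 : 4*n+1 = 4*(q*a) + (4*r+1) := by rw [← hmod]; ring
      exact (Nat.dvd_add_right hx).mp (h3 ▸ hq)
    obtain ⟨k, hk⟩ := h1
    have hk5 : q * k < q * 4 := by rw [← hk]; omega
    have hk4 : k < 4 := lt_of_mul_lt_mul_left hk5 (Nat.zero_le q)
    have hkey : 4*r + 1 = 3*q := by interval_cases k <;> omega
    have h6 : 4*n = q*(4*a+2) + (q-1) := by
      have e1 : q*(4*a+2) = 4*(q*a) + 2*q := by ring
      have e2 : 4*n = 4*(q*a) + 4*r := by rw [← hmod]; ring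
      omega
    rw [h6, Nat.mul_add_div hqpos, Nat.div_eq_of_lt (by omega), Nat.add_zero]
  -- termwise: 4⌊n/p^i⌋ ≤ ⌊4n/p^i⌋
  have hterm : ∀ i : ℕ, 4*(n / p^i) ≤ 4*n / p^i := by
    intro i
    rw [Nat.le_div_iff_mul_le (pow_pos hppos i), mul_assoc]
    have := Nat.div_mul_le_self n (p^i)
    omega
  have hs4n : s ≤ 4*n := by
    have h1 : s < p ^ s := Nat.lt_pow_self hp.one_lt
    have h2 : p ^ s ≤ 4*n+1 := Nat.le_of_dvd (by omega) hs
    omega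
  -- the sum inequality
  have main : 4 * (∑ i ∈ Finset.Ico 1 (4*n+1), n / p^i) + s
      ≤ ∑ i ∈ Finset.Ico 1 (4*n+1), 4*n / p^i := by
    have hsplit : ∑ i ∈ Finset.Ico 1 (4*n+1), 4*n / p^i
        = (∑ i ∈ Finset.Ico 1 (4*n+1), 4*(n / p^i))
          + ∑ i ∈ Finset.Ico 1 (4*n+1), (4*n / p^i - 4*(n / p^i)) := by
      rw [← Finset.sum_add_distrib]
      exact Finset.sum_congr rfl fun i _ => by have := hterm i; omega
    have himg : (Finset.range ((s+1)/2)).image (fun j => 2*j+1)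
        ⊆ Finset.Ico 1 (4*n+1) := by
      intro x hx
      simp only [Finset.mem_image, Finset.mem_range] at hx
      obtain ⟨j, hj, rfl⟩ := hx
      simp only [Finset.mem_Ico]
      omega
    have hlow : s ≤ ∑ i ∈ Finset.Ico 1 (4*n+1), (4*n / p^i - 4*(n / p^i)) := by
      have h1 : ∑ j ∈ Finset.range ((s+1)/2),
          (4*n / p^(2*j+1) - 4*(n / p^(2*j+1)))
          = ∑ i ∈ (Finset.range ((s+1)/2)).image (fun j => 2*j+1),
            (4*n / p^i - 4*(n / p^i)) := by
        rw [Finset.sum_image (by intro x _ y _ h; simp only at h; omega)]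
      have h2 : ∑ j ∈ Finset.range ((s+1)/2),
          (4*n / p^(2*j+1) - 4*(n / p^(2*j+1))) = 2 * ((s+1)/2) := by
        rw [Finset.sum_congr rfl fun j hj => ?_, Finset.sum_const,
          Finset.card_range, smul_eq_mul, mul_comm]
        simp only [Finset.mem_range] at hj
        rw [key (2*j+1) ⟨j, by ring⟩ (by omega)]
        omega
      calc s ≤ 2 * ((s+1)/2) := by omega
        _ = ∑ i ∈ (Finset.range ((s+1)/2)).image (fun j => 2*j+1),
            (4*n / p^i - 4*(n / p^i)) := by rw [← h1, h2]
        _ ≤ _ := Finset.sum_le_sum_of_subset himg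
    rw [hsplit, Finset.mul_sum]
    omega
  rw [padicValNat_dvd_iff_le hq0, padicValNat.div_of_dvd hdvd,
    padicValNat.pow (n.factorial) 4,
    padicValNat_factorial (b := 4*n+1)
      (lt_of_le_of_lt (Nat.log_le_self p (4*n)) (by omega)),
    padicValNat_factorial (b := 4*n+1)
      (lt_of_le_of_lt (Nat.log_le_self p n) (by omega))]
  omega
end

section
/- Let α be an algebraic integer all of whose conjugates in ℂ (i.e., all complex roots of its minimal polynomial over ℚ) have absolute value 1. Then α is a root of unity. -/
open IntermediateField

theorem kronecker_root_of_unity (α : ℂ) (hα : IsIntegral ℤ α)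
    (h : ∀ β : ℂ, ((minpoly ℚ α).map (algebraMap ℚ ℂ)).IsRoot β → ‖β‖ = 1) :
    ∃ n : ℕ, 0 < n ∧ α ^ n = 1 := by
  have hαQ : IsIntegral ℚ α := hα.tower_top
  let K := ℚ⟮α⟯
  haveI : FiniteDimensional ℚ K := IntermediateField.adjoin.finiteDimensional hαQ
  haveI : NumberField K := ⟨⟩
  let x : K := IntermediateField.AdjoinSimple.gen ℚ α
  have hmap : algebraMap K ℂ x = α := IntermediateField.AdjoinSimple.algebraMap_gen ℚ α
  have hxi : IsIntegral ℤ x := by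
    have := hα
    rw [← hmap] at this
    exact (isIntegral_algebraMap_iff (algebraMap K ℂ).injective).mp this
  have hminpoly : minpoly ℚ x = minpoly ℚ α := by
    rw [← hmap]
    exact (minpoly.algebraMap_eq (A := ℚ) (B := K) (B' := ℂ) (algebraMap K ℂ).injective x).symm
  have hx : ∀ φ : K →+* ℂ, ‖φ x‖ = 1 := by
    intro φ
    have hroot : ((minpoly ℚ α).map (algebraMap ℚ ℂ)).IsRoot (φ x) := by
      have : Polynomial.aeval (φ.toRatAlgHom x) (minpoly ℚ x) = 0 := by
        rw [Polynomial.aeval_algHom_apply, minpoly.aeval, map_zero]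
      rw [hminpoly] at this
      rw [Polynomial.IsRoot, ← Polynomial.eval₂_eq_eval_map, ← Polynomial.aeval_def]
      exact this
    simpa using h (φ x) hroot
  obtain ⟨n, hn, hxn⟩ := NumberField.Embeddings.pow_eq_one_of_norm_eq_one K ℂ hxi hx
  refine ⟨n, hn, ?_⟩
  rw [← hmap, ← map_pow, hxn, map_one]
end
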